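/- Let s, σ ∈ ℝ. Set u = cos σ·k − sin σ·j (this is e^{σi}k), h = cos σ·j + sin σ·k (this is e^{σi}j), a = i, f = i, q = exp(s·h), p = exp(s·h) * exp((s·cos σ)·u) * exp(−s·h), and b = exp(s·h) * exp((−σ)·u) * i * exp(−s·h). Then: (1) im(f*a⁻¹*h) = h, so q = exp(s·im(f*a⁻¹*h)); (2) p = exp(s·im(b*h)); (3) re(q⁻¹ * p⁻¹ * h * p * q * star(h) * a) = 0; (4) re(h * star(a)) = 0; (5) re(b * a⁻¹) = cos(2s)·cos σ; (6) re(b * star(h)) = −sin σ. (Lemma 7.3 of the paper, bypass case: the given circle of quaternion tuples satisfies the perturbation conditions and the bypass equations G' = (0,0), and realizes the stated characters; it parameterizes K'_s, the preimage of the bottom edge of the pillowcase in N'_s.) -/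

import Mathlib

open Quaternion

/-- The imaginary unit `i` of the quaternions. -/
noncomputable def qi : ℍ[ℝ] := ⟨0, 1, 0, 0⟩
/-- The imaginary unit `j` of the quaternions. -/
noncomputable def qj : ℍ[ℝ] := ⟨0, 0, 1, 0⟩
/-- The imaginary unit `k` of the quaternions. -/
noncomputable def qk : ℍ[ℝ] := ⟨0, 0, 0, 1⟩

/-!
With `h = e^{σi} j` and `u = e^{σi} k`, the triple `(i, h, u)` multiplies like `(i, j, k)`.
Hence `q = e^{sh}` commutes with `h`, while `i` and `u` anticommute with `h`, so
`x e^{th} = e^{-th} x` for `x ∈ {i, u}`. This gives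
`b h = q e^{-σu} u q⁻¹ = sin σ + cos σ · q u q⁻¹`, whence `p = q e^{s cos σ · u} q⁻¹` is
`exp (s · im (b h))` and `re (b h̄) = -sin σ`. Since `p q = q e^{s cos σ · u}`, the bypass
expression collapses to `re (e^{-2 s cos σ · u} i) = 0`, and `b i⁻¹ = q e^{-σu} q` has real
part `re (e^{2sh} e^{-σu}) = cos 2s cos σ`.
-/

open NormedSpace

/-- Needed by `exp_neg`, `exp_conj` and `SemiconjBy.exp_right`. -/
noncomputable instance : NormedAlgebra ℚ ℍ[ℝ] := NormedAlgebra.restrictScalars ℚ ℝ ℍ[ℝ]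

namespace Quaternion

theorem re_mul_comm {R : Type*} [CommRing R] (x y : ℍ[R]) : (x * y).re = (y * x).re := by
  simp only [re_mul]; ring

theorem re_mul_mul_inv (x : ℍ[ℝ]) {y : ℍ[ℝ]} (hy : y ≠ 0) : (y * x * y⁻¹).re = x.re := by
  rw [re_mul_comm, ← mul_assoc, inv_mul_cancel₀ hy, one_mul]

theorem im_eq_self_of_re_eq_zero {x : ℍ[ℝ]} (hx : x.re = 0) : x.im = x := by
  conv_rhs => rw [← re_add_im x, hx]
  simp

theorem exp_smul_of_re_eq_zero {v : ℍ[ℝ]} (hv : v.re = 0) (hv1 : ‖v‖ = 1) (t : ℝ) :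
    exp (t • v) = ↑(Real.cos t) + Real.sin t • v := by
  rw [exp_of_re_eq_zero _ (by simp [hv]), norm_smul, hv1, mul_one, Real.norm_eq_abs,
    Real.cos_abs, smul_smul]
  congr 2
  rcases eq_or_ne t 0 with rfl | ht
  · simp
  rcases abs_choice t with h | h
  · rw [h]; field_simp
  · rw [h, Real.sin_neg]; field_simp

/-- Orthogonal imaginary quaternions anticommute, so conjugating by one negates the other. -/
theorem mul_exp_smul_eq_exp_neg_smul_mul {v w : ℍ[ℝ]} (hv : v.re = 0) (hw : w.re = 0)
    (hvw : (w * v).re = 0) (t : ℝ) : w * exp (t • v) = exp ((-t) • v) * w := by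
  have hanti : SemiconjBy w v (-v) := by
    rw [SemiconjBy]
    ext <;> simp only [re_mul, imI_mul, imJ_mul, imK_mul, re_neg, imI_neg, imJ_neg, imK_neg,
      hv, hw] at hvw ⊢ <;> linarith
  simpa only [neg_smul, smul_neg] using (hanti.smul_right t).exp_right.eq

end Quaternion

@[simp] lemma re_qi : qi.re = 0 := rfl
@[simp] lemma imI_qi : qi.imI = 1 := rfl
@[simp] lemma imJ_qi : qi.imJ = 0 := rfl
@[simp] lemma imK_qi : qi.imK = 0 := rfl
@[simp] lemma re_qj : qj.re = 0 := rfl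
@[simp] lemma imI_qj : qj.imI = 0 := rfl
@[simp] lemma imJ_qj : qj.imJ = 1 := rfl
@[simp] lemma imK_qj : qj.imK = 0 := rfl
@[simp] lemma re_qk : qk.re = 0 := rfl
@[simp] lemma imI_qk : qk.imI = 0 := rfl
@[simp] lemma imJ_qk : qk.imJ = 0 := rfl
@[simp] lemma imK_qk : qk.imK = 1 := rfl

/-- `e^{σi} j`, the paper's `h`. -/
noncomputable def rotJ (σ : ℝ) : ℍ[ℝ] := Real.cos σ • qj + Real.sin σ • qk

/-- `e^{σi} k`, the paper's `u`. -/
noncomputable def rotK (σ : ℝ) : ℍ[ℝ] := Real.cos σ • qk - Real.sin σ • qj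

section Frame

variable (σ : ℝ)

@[simp] lemma re_rotJ : (rotJ σ).re = 0 := by simp [rotJ]

@[simp] lemma re_rotK : (rotK σ).re = 0 := by simp [rotK]

lemma norm_rotJ : ‖rotJ σ‖ = 1 := by
  rw [norm_eq_sqrt_real_inner, inner_self, Real.sqrt_eq_one]
  simp [normSq_def', rotJ]

lemma norm_rotK : ‖rotK σ‖ = 1 := by
  rw [norm_eq_sqrt_real_inner, inner_self, Real.sqrt_eq_one]
  simp [normSq_def', rotK]

lemma qi_mul_qi : qi * qi = -1 := by ext <;> simp

lemma rotJ_mul_rotJ : rotJ σ * rotJ σ = -1 := by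
  ext <;> simp [rotJ] <;> linarith [Real.cos_sq_add_sin_sq σ]

lemma rotK_mul_rotK : rotK σ * rotK σ = -1 := by
  ext <;> simp [rotK] <;> linarith [Real.cos_sq_add_sin_sq σ]

lemma qi_mul_rotJ : qi * rotJ σ = rotK σ := by
  ext <;> simp [rotJ, rotK]

lemma rotJ_mul_rotK : rotJ σ * rotK σ = qi := by
  ext <;> simp [rotJ, rotK] <;> linarith [Real.cos_sq_add_sin_sq σ]

lemma rotK_mul_qi : rotK σ * qi = rotJ σ := by
  ext <;> simp [rotJ, rotK]

lemma inv_qi : qi⁻¹ = -qi :=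
  inv_eq_of_mul_eq_one_right (by rw [mul_neg, qi_mul_qi, neg_neg])

lemma qi_mul_exp_smul_rotJ (t : ℝ) : qi * exp (t • rotJ σ) = exp ((-t) • rotJ σ) * qi :=
  mul_exp_smul_eq_exp_neg_smul_mul (re_rotJ σ) re_qi (by rw [qi_mul_rotJ, re_rotK]) t

lemma rotJ_mul_exp_smul_rotK (t : ℝ) :
    rotJ σ * exp (t • rotK σ) = exp ((-t) • rotK σ) * rotJ σ :=
  mul_exp_smul_eq_exp_neg_smul_mul (re_rotK σ) (re_rotJ σ) (by rw [rotJ_mul_rotK, re_qi]) t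

lemma exp_smul_rotK_mul_rotK (t : ℝ) :
    exp (t • rotK σ) * rotK σ = ↑(-Real.sin t) + Real.cos t • rotK σ := by
  rw [exp_smul_of_re_eq_zero (re_rotK σ) (norm_rotK σ), add_mul, coe_mul_eq_smul,
    smul_mul_assoc, rotK_mul_rotK]
  ext <;> simp [add_comm]

end Frame

/-- The paper's `b`, with `exp ((-s) • h) = q⁻¹`. -/
noncomputable def circleB (s σ : ℝ) : ℍ[ℝ] :=
  exp (s • rotJ σ) * exp ((-σ) • rotK σ) * qi * exp ((-s) • rotJ σ)

/-- The paper's `p`. -/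
noncomputable def circleP (s σ : ℝ) : ℍ[ℝ] :=
  exp (s • rotJ σ) * exp ((s * Real.cos σ) • rotK σ) * exp ((-s) • rotJ σ)

section Circle

variable (s σ : ℝ)

lemma circleB_mul_rotJ :
    circleB s σ * rotJ σ =
      ↑(Real.sin σ) + Real.cos σ • (exp (s • rotJ σ) * rotK σ * (exp (s • rotJ σ))⁻¹) := by
  rw [circleB, neg_smul s, exp_neg]
  set Q := exp (s • rotJ σ)
  have hQ : Q ≠ 0 := (isUnit_exp _).ne_zero
  have hcomm : Commute (rotJ σ) Q⁻¹ := ((Commute.refl _).smul_right s).exp_right.inv_right₀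
  calc Q * exp ((-σ) • rotK σ) * qi * Q⁻¹ * rotJ σ
      = Q * (exp ((-σ) • rotK σ) * rotK σ) * Q⁻¹ := by
        simp only [mul_assoc, ← hcomm.eq]
        rw [← mul_assoc qi, qi_mul_rotJ]
    _ = _ := by
        rw [exp_smul_rotK_mul_rotK, Real.sin_neg, neg_neg, Real.cos_neg, mul_add, add_mul,
          ← coe_commutes, mul_inv_cancel_right₀ hQ, mul_smul_comm, smul_mul_assoc]

lemma im_circleB_mul_rotJ :
    (circleB s σ * rotJ σ).im =
      Real.cos σ • (exp (s • rotJ σ) * rotK σ * (exp (s • rotJ σ))⁻¹) := by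
  rw [circleB_mul_rotJ, im_add, im_coe, zero_add, im_smul,
    im_eq_self_of_re_eq_zero (by rw [re_mul_mul_inv _ (isUnit_exp _).ne_zero, re_rotK])]

lemma exp_smul_im_circleB_mul_rotJ : exp (s • (circleB s σ * rotJ σ).im) = circleP s σ := by
  rw [im_circleB_mul_rotJ, smul_smul, ← smul_mul_assoc, ← mul_smul_comm,
    exp_conj _ _ (isUnit_exp _).ne_zero, circleP, neg_smul s, exp_neg]

lemma re_circleB_mul_star_rotJ : (circleB s σ * star (rotJ σ)).re = -Real.sin σ := by
  rw [star_eq_neg.mpr (re_rotJ σ), mul_neg, re_neg, circleB_mul_rotJ, re_add, re_coe, re_smul,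
    re_mul_mul_inv _ (isUnit_exp _).ne_zero, re_rotK, smul_zero, add_zero]

lemma re_circleB_mul_inv_qi : (circleB s σ * qi⁻¹).re = Real.cos (2 * s) * Real.cos σ := by
  have hQQ : exp (s • rotJ σ) * exp (s • rotJ σ) = exp ((2 * s) • rotJ σ) := by
    rw [← exp_add_of_commute (Commute.refl _), ← add_smul, two_mul]
  calc (circleB s σ * qi⁻¹).re
      = (exp (s • rotJ σ) * exp ((-σ) • rotK σ) * exp (s • rotJ σ)).re := by
        simp only [circleB, inv_qi, mul_neg, mul_assoc, ← qi_mul_exp_smul_rotJ]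
        rw [← mul_assoc qi qi, qi_mul_qi, neg_one_mul, mul_neg, mul_neg, neg_neg]
    _ = (exp ((2 * s) • rotJ σ) * exp ((-σ) • rotK σ)).re := by
        rw [re_mul_comm, ← mul_assoc, hQQ]
    _ = Real.cos (2 * s) * Real.cos σ := by
        rw [exp_smul_of_re_eq_zero (re_rotJ σ) (norm_rotJ σ),
          exp_smul_of_re_eq_zero (re_rotK σ) (norm_rotK σ)]
        simp [add_mul, mul_add, rotJ_mul_rotK]

lemma circleP_mul_exp_smul_rotJ :
    circleP s σ * exp (s • rotJ σ) = exp (s • rotJ σ) * exp ((s * Real.cos σ) • rotK σ) := by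
  rw [circleP, neg_smul s, exp_neg, inv_mul_cancel_right₀ (isUnit_exp _).ne_zero]

lemma conj_rotJ_by_circleP_mul_exp_smul_rotJ :
    (exp (s • rotJ σ))⁻¹ * (circleP s σ)⁻¹ * rotJ σ * circleP s σ * exp (s • rotJ σ) =
      exp ((-(2 * (s * Real.cos σ))) • rotK σ) * rotJ σ := by
  have hPQ := circleP_mul_exp_smul_rotJ s σ
  set Q := exp (s • rotJ σ)
  set E := exp ((s * Real.cos σ) • rotK σ)
  have hcomm : Commute (rotJ σ) Q⁻¹ := ((Commute.refl _).smul_right s).exp_right.inv_right₀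
  calc Q⁻¹ * (circleP s σ)⁻¹ * rotJ σ * circleP s σ * Q
      = (circleP s σ * Q)⁻¹ * rotJ σ * (circleP s σ * Q) := by
        rw [mul_inv_rev]; simp only [mul_assoc]
    _ = E⁻¹ * (rotJ σ * Q⁻¹ * Q) * E := by
        rw [hPQ, mul_inv_rev, hcomm.eq]; simp only [mul_assoc]
    _ = exp ((-(s * Real.cos σ)) • rotK σ) * (rotJ σ * E) := by
        rw [inv_mul_cancel_right₀ (isUnit_exp _).ne_zero, neg_smul, exp_neg, mul_assoc]
    _ = exp ((-(2 * (s * Real.cos σ))) • rotK σ) * rotJ σ := by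
        rw [rotJ_mul_exp_smul_rotK, ← mul_assoc, ← exp_add_of_commute (Commute.refl _),
          ← add_smul, ← neg_add, two_mul]

lemma re_bypass_equation :
    ((exp (s • rotJ σ))⁻¹ * (circleP s σ)⁻¹ * rotJ σ * circleP s σ * exp (s • rotJ σ) *
      star (rotJ σ) * qi).re = 0 := by
  rw [conj_rotJ_by_circleP_mul_exp_smul_rotJ, star_eq_neg.mpr (re_rotJ σ),
    mul_assoc _ (rotJ σ), mul_neg, rotJ_mul_rotJ, neg_neg, mul_one,
    exp_smul_of_re_eq_zero (re_rotK σ) (norm_rotK σ)]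
  simp [add_mul, rotK_mul_qi]

end Circle

/-- Lemma 7.3 of the paper, bypass case: the given circle of quaternion tuples satisfies the
perturbation conditions and the bypass equations `G' = (0,0)`, and realizes the stated
characters; it parameterizes `K'_s`, the preimage of the bottom edge of the pillowcase in
`N'_s`. -/
theorem bypass_bottom_edge_parameterization (s σ : ℝ)
    (u h a f q p b : ℍ[ℝ])
    (hu : u = Real.cos σ • qk - Real.sin σ • qj)
    (hh : h = Real.cos σ • qj + Real.sin σ • qk)
    (ha : a = qi) (hf : f = qi)
    (hq : q = NormedSpace.exp (s • h))
    (hp : p = NormedSpace.exp (s • h) * NormedSpace.exp ((s * Real.cos σ) • u) *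
      NormedSpace.exp ((-s) • h))
    (hb : b = NormedSpace.exp (s • h) * NormedSpace.exp ((-σ) • u) * qi *
      NormedSpace.exp ((-s) • h)) :
    Quaternion.im (f * a⁻¹ * h) = h ∧
    q = NormedSpace.exp (s • Quaternion.im (f * a⁻¹ * h)) ∧
    p = NormedSpace.exp (s • Quaternion.im (b * h)) ∧
    (q⁻¹ * p⁻¹ * h * p * q * star h * a).re = 0 ∧
    (h * star a).re = 0 ∧
    (b * a⁻¹).re = Real.cos (2 * s) * Real.cos σ ∧
    (b * star h).re = -Real.sin σ := by
  obtain rfl : h = rotJ σ := hh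
  obtain rfl : u = rotK σ := hu
  obtain rfl : b = circleB s σ := hb
  obtain rfl : p = circleP s σ := hp
  subst ha hf hq
  have him : (qi * qi⁻¹ * rotJ σ).im = rotJ σ := by
    rw [inv_qi, mul_neg, qi_mul_qi, neg_neg, one_mul, im_eq_self_of_re_eq_zero (re_rotJ σ)]
  refine ⟨him, by rw [him], (exp_smul_im_circleB_mul_rotJ s σ).symm, re_bypass_equation s σ,
    by simp [rotJ], re_circleB_mul_inv_qi s σ, re_circleB_mul_star_rotJ s σ⟩
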